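/- Symplectic covariance of Lagrangian polar duality: let (ℓ, ℓ′) be a Lagrangian frame in (ℝ^{2n}, ω), let X ⊆ ℓ, and let S ∈ Sp(n). Then S((X)_{ℓ′}^ħ) = (SX)_{Sℓ′}^ħ, where (X)_{ℓ′}^ħ = {z′ ∈ ℓ′ : sup_{z∈X} ω(z, z′) ≤ ħ} and (SX)_{Sℓ′}^ħ = {z′ ∈ Sℓ′ : sup_{z∈SX} ω(z, z′) ≤ ħ}. -/
import Mathlib


open Matrix ComplexOrder MeasureTheory

noncomputable section

/-- Phase space ℝ^{2n} ≃ ℝⁿ × ℝⁿ, with coordinates z = (x,p). -/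
abbrev PS (n : ℕ) := Fin n ⊕ Fin n → ℝ

/-- The standard symplectic matrix J = [[0, I], [-I, 0]]. -/
def Jmat (n : ℕ) : Matrix (Fin n ⊕ Fin n) (Fin n ⊕ Fin n) ℝ :=
  Matrix.fromBlocks 0 1 (-1) 0

/-- The standard symplectic form ω(z,z′) = (Jz)·z′. -/
def symp (n : ℕ) (z z' : PS n) : ℝ := (Jmat n).mulVec z ⬝ᵥ z'

/-- The symplectic group Sp(n) = {S : SᵀJS = J}. -/
def Sp (n : ℕ) : Set (Matrix (Fin n ⊕ Fin n) (Fin n ⊕ Fin n) ℝ) :=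
  {S | Sᵀ * Jmat n * S = Jmat n}

/-- A Lagrangian subspace: an n-dimensional subspace on which ω vanishes identically. -/
def IsLagrangian (n : ℕ) (ℓ : Submodule ℝ (PS n)) : Prop :=
  Module.finrank ℝ ℓ = n ∧ ∀ z ∈ ℓ, ∀ z' ∈ ℓ, symp n z z' = 0
/-- Lagrangian polar dual (X)_{ℓ′}^ℏ = {z′ ∈ ℓ′ : sup_{z∈X} ω(z,z′) ≤ ℏ}. -/
def lagDual (n : ℕ) (ℏ : ℝ) (ℓ' : Submodule ℝ (PS n)) (X : Set (PS n)) : Set (PS n) :=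
  {z' | z' ∈ ℓ' ∧ ∀ z ∈ X, symp n z z' ≤ ℏ}

lemma symp_mulVec (n : ℕ) (S : Matrix (Fin n ⊕ Fin n) (Fin n ⊕ Fin n) ℝ) (hS : S ∈ Sp n)
    (z z' : PS n) : symp n (S.mulVec z) (S.mulVec z') = symp n z z' := by
  have h : Sᵀ * Jmat n * S = Jmat n := hS
  have : ((Sᵀ * Jmat n * S).mulVec z) ⬝ᵥ z' = (Jmat n).mulVec z ⬝ᵥ z' := by rw [h]
  simp only [symp]
  rw [← this, ← Matrix.mulVec_mulVec, ← Matrix.mulVec_mulVec, Matrix.mulVec_transpose,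
    ← Matrix.dotProduct_mulVec]

/-- Symplectic covariance of Lagrangian polar duality: S((X)_{ℓ′}^ℏ) = (SX)_{Sℓ′}^ℏ. -/
theorem lagDual_image (n : ℕ) (ℏ : ℝ) (hℏ : 0 < ℏ)
    (ℓ ℓ' : Submodule ℝ (PS n))
    (hℓ : IsLagrangian n ℓ) (hℓ' : IsLagrangian n ℓ') (htrans : ℓ ⊓ ℓ' = ⊥)
    (X : Set (PS n)) (hX : X ⊆ (ℓ : Set (PS n)))
    (S : Matrix (Fin n ⊕ Fin n) (Fin n ⊕ Fin n) ℝ) (hS : S ∈ Sp n) :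
    S.mulVec '' lagDual n ℏ ℓ' X
      = lagDual n ℏ (ℓ'.map (Matrix.mulVecLin S)) (S.mulVec '' X) := by
  ext w
  constructor
  · rintro ⟨z', ⟨hz'm, hz'b⟩, rfl⟩
    refine ⟨⟨z', hz'm, rfl⟩, ?_⟩
    rintro _ ⟨z, hz, rfl⟩
    rw [symp_mulVec n S hS]
    exact hz'b z hz
  · rintro ⟨⟨z', hz'm, rfl⟩, hb⟩
    refine ⟨z', ⟨hz'm, fun z hz => ?_⟩, rfl⟩
    rw [← symp_mulVec n S hS]
    exact hb _ ⟨z, hz, rfl⟩
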